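/- Let k be a field of characteristic ≠ 2,3, E : y² = x³ + Ax + B with 4A³ + 27B² ≠ 0, and G = (x_G, y_G) a point on E with y_G ≠ 0. Let W = (x_W, y_W) on E with x_W ≠ x_G, W ⊕ G ≠ 𝒪, and x(W ⊕ G) ≠ x_G. Writing x' = x(W ⊕ G) and x'' = x(W ⊕ 2G), the value x'' is determined by x_W, x', x_G, y_G², A, B via x'' = 2(x'³ + A x' + B + y_G²)/(x' − x_G)² − 2(x' + x_G) − x_W. -/

import Mathlib

/-- The elliptic curve `y² = x³ + Ax + B` in affine Weierstrass form. -/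
def Ecurve {k : Type*} [CommRing k] (A B : k) : WeierstrassCurve.Affine k :=
  { a₁ := 0, a₂ := 0, a₃ := 0, a₄ := A, a₆ := B }

/-- The x-coordinate of a nonsingular point, with the convention `x(𝒪) = 0`. -/
def xcoord {k : Type*} [Field k] {W : WeierstrassCurve.Affine k} : W.Point → k
  | .zero => 0
  | @WeierstrassCurve.Affine.Point.some _ _ _ x _ _ => x

/-
`x(P ⊕ G)` and `x(P ⊖ G)` are the third intersections of `E` with the chords through `P` and
`±G`; their sum is symmetric in `±y_G`, so it only involves `y_P² + y_G²`, and `y_P²` is a cubic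
in `x_P`. Taking `P = W ⊕ G` gives `x(W ⊕ 2G) + x_W`.
-/

open WeierstrassCurve.Affine WeierstrassCurve.Affine.Point

lemma Ecurve_equation_iff {R : Type*} [CommRing R] {A B x y : R} :
    (Ecurve A B).Equation x y ↔ y ^ 2 = x ^ 3 + A * x + B := by
  rw [equation_iff]
  simp only [Ecurve]
  constructor <;> intro h <;> linear_combination h

section Ecurve

variable {k : Type*} [Field k] [DecidableEq k] {A B : k}

lemma Ecurve_addX_slope_add_addX_slope_negY {x₁ x₂ : k} (y₁ y₂ : k) (hx : x₁ ≠ x₂) :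
    (Ecurve A B).addX x₁ x₂ ((Ecurve A B).slope x₁ x₂ y₁ y₂) +
        (Ecurve A B).addX x₁ x₂ ((Ecurve A B).slope x₁ x₂ y₁ ((Ecurve A B).negY x₂ y₂)) =
      2 * (y₁ ^ 2 + y₂ ^ 2) / (x₁ - x₂) ^ 2 - 2 * (x₁ + x₂) := by
  have hd : x₁ - x₂ ≠ 0 := sub_ne_zero.mpr hx
  simp only [addX, slope_of_X_ne hx, negY, Ecurve]
  field_simp
  ring

lemma Ecurve_xcoord_add_add_xcoord_sub {x₁ y₁ x₂ y₂ : k} (h₁ : (Ecurve A B).Nonsingular x₁ y₁)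
    (h₂ : (Ecurve A B).Nonsingular x₂ y₂) (hx : x₁ ≠ x₂) :
    xcoord (some _ _ h₁ + some _ _ h₂) + xcoord (some _ _ h₁ - some _ _ h₂) =
      2 * (x₁ ^ 3 + A * x₁ + B + y₂ ^ 2) / (x₁ - x₂) ^ 2 - 2 * (x₁ + x₂) := by
  rw [sub_eq_add_neg, neg_some, add_of_X_ne hx, add_of_X_ne hx,
    ← Ecurve_equation_iff.mp h₁.1]
  exact Ecurve_addX_slope_add_addX_slope_negY y₁ y₂ hx

end Ecurve

open Classical in
theorem stmt12_general {k : Type*} [Field k]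
    (A B x_G y_G x_W y_W : k)
    (hG : (Ecurve A B).Nonsingular x_G y_G)
    (hW : (Ecurve A B).Nonsingular x_W y_W)
    (hWG : WeierstrassCurve.Affine.Point.some _ _ hW + WeierstrassCurve.Affine.Point.some _ _ hG ≠ 0)
    (hx' : xcoord (WeierstrassCurve.Affine.Point.some _ _ hW + WeierstrassCurve.Affine.Point.some _ _ hG)
      ≠ x_G)
    (x' : k)
    (hx'def : x' =
      xcoord (WeierstrassCurve.Affine.Point.some _ _ hW + WeierstrassCurve.Affine.Point.some _ _ hG)) :
    xcoord (WeierstrassCurve.Affine.Point.some _ _ hW + WeierstrassCurve.Affine.Point.some _ _ hG +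
        WeierstrassCurve.Affine.Point.some _ _ hG) =
      2 * (x' ^ 3 + A * x' + B + y_G ^ 2) / (x' - x_G) ^ 2 - 2 * (x' + x_G) - x_W := by
  obtain ⟨x₁, y₁, h₁, hP⟩ : ∃ (x₁ y₁ : k) (h₁ : (Ecurve A B).Nonsingular x₁ y₁),
      some _ _ hW + some _ _ hG = some _ _ h₁ := by
    cases h : some _ _ hW + some _ _ hG with
    | zero => exact absurd h hWG
    | some _ _ h₁ => exact ⟨_, _, h₁, rfl⟩
  have hW_eq : some _ _ h₁ - some _ _ hG = some _ _ hW := by rw [← hP, add_sub_cancel_right]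
  rw [hP] at hx' hx'def ⊢
  subst hx'def
  have key := Ecurve_xcoord_add_add_xcoord_sub h₁ hG hx'
  rw [hW_eq] at key
  exact eq_sub_of_add_eq key

open Classical in
/-- The recurrence underlying the elliptic curve congruential generator: if
`G = (x_G, y_G)` (with `y_G ≠ 0`) and `W = (x_W, y_W)` lie on the nonsingular curve
`y² = x³ + Ax + B`, `x_W ≠ x_G`, `W ⊕ G ≠ 𝒪` and `x(W ⊕ G) ≠ x_G`, then writing
`x' = x(W ⊕ G)`, we have
`x(W ⊕ 2G) = 2(x'³ + A x' + B + y_G²)/(x' − x_G)² − 2(x' + x_G) − x_W`. -/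
theorem stmt12 {k : Type*} [Field k] (h2 : (2 : k) ≠ 0) (h3 : (3 : k) ≠ 0)
    (A B x_G y_G x_W y_W : k)
    (hΔ : 4 * A ^ 3 + 27 * B ^ 2 ≠ 0)
    (hG : (Ecurve A B).Nonsingular x_G y_G)
    (hW : (Ecurve A B).Nonsingular x_W y_W)
    (hyG : y_G ≠ 0)
    (hx : x_W ≠ x_G)
    (hWG : WeierstrassCurve.Affine.Point.some _ _ hW + WeierstrassCurve.Affine.Point.some _ _ hG ≠ 0)
    (hx' : xcoord (WeierstrassCurve.Affine.Point.some _ _ hW + WeierstrassCurve.Affine.Point.some _ _ hG)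
      ≠ x_G)
    (x' : k)
    (hx'def : x' =
      xcoord (WeierstrassCurve.Affine.Point.some _ _ hW + WeierstrassCurve.Affine.Point.some _ _ hG)) :
    xcoord (WeierstrassCurve.Affine.Point.some _ _ hW + WeierstrassCurve.Affine.Point.some _ _ hG +
        WeierstrassCurve.Affine.Point.some _ _ hG) =
      2 * (x' ^ 3 + A * x' + B + y_G ^ 2) / (x' - x_G) ^ 2 - 2 * (x' + x_G) - x_W :=
  stmt12_general A B x_G y_G x_W y_W hG hW hWG hx' x' hx'def
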